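/- Let c, d be positive integers and let H be a graph with χ(K_c^H) ≥ c + 1 and χ(H) ≥ 2cd. Then for every integer i with 0 ≤ i ≤ (c−1)d, there exist graphs G' and H' with χ(G') ≥ cd + d + i and χ(H') ≥ cd + d + i and χ(G' × H') ≤ cd + i; consequently the Poljak–Rödl function satisfies f(cd + d + i) ≤ cd + i. -/

import Mathlib

open SimpleGraph

/-- The categorical (tensor) product of two simple graphs. -/
def tensorProd {V W : Type*} (G : SimpleGraph V) (H : SimpleGraph W) :
    SimpleGraph (V × W) where
  Adj a b := G.Adj a.1 b.1 ∧ H.Adj a.2 b.2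
  symm := ⟨fun a b h => ⟨h.1.symm, h.2.symm⟩⟩
  loopless := ⟨fun a h => G.ne_of_adj h.1 rfl⟩

/-- The exponential graph `K_c^H`: vertices are functions `V(H) → Fin c`,
two distinct functions `f, g` are adjacent iff `f u ≠ g v` for every edge `uv` of `H`. -/
def expGraph {V : Type*} (H : SimpleGraph V) (c : ℕ) : SimpleGraph (V → Fin c) where
  Adj f g := f ≠ g ∧ ∀ u v, H.Adj u v → f u ≠ g v
  symm := ⟨fun f g h => ⟨h.1.symm, fun u v huv => (h.2 v u huv.symm).symm⟩⟩
  loopless := ⟨fun f h => h.1 rfl⟩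

/-- The Kneser graph `K(m, n)`: vertices are the `n`-element subsets of an `m`-element set,
two distinct such subsets being adjacent iff they are disjoint. -/
def kneser (m n : ℕ) : SimpleGraph {A : Finset (Fin m) // A.card = n} where
  Adj A B := A ≠ B ∧ Disjoint A.1 B.1
  symm := ⟨fun A B h => ⟨h.1.symm, h.2.symm⟩⟩
  loopless := ⟨fun A h => h.1 rfl⟩

/-- The `n`-th multichromatic number of a graph: the least `m` such that the graph
admits a homomorphism to the Kneser graph `K(m, n)`. -/
noncomputable def multichromatic {V : Type*} (H : SimpleGraph V) (n : ℕ) : ℕ :=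
  sInf {m : ℕ | Nonempty (H →g kneser m n)}

/-- The Poljak–Rödl function `f(n) = min {χ(G × H) : χ(G) ≥ n, χ(H) ≥ n}`. -/
noncomputable def poljakRodl (n : ℕ) : ℕ :=
  sInf {k : ℕ | ∃ (p q : ℕ) (G : SimpleGraph (Fin p)) (H : SimpleGraph (Fin q)),
    (n : ℕ∞) ≤ G.chromaticNumber ∧ (n : ℕ∞) ≤ H.chromaticNumber ∧
    (tensorProd G H).chromaticNumber = (k : ℕ∞)}

/-- The lexicographic product `G[H]`. -/
def lexProd {V W : Type*} (G : SimpleGraph V) (H : SimpleGraph W) :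
    SimpleGraph (V × W) where
  Adj a b := G.Adj a.1 b.1 ∨ (a.1 = b.1 ∧ H.Adj a.2 b.2)
  symm := ⟨fun a b h => by
    rcases h with h | ⟨h1, h2⟩
    · exact Or.inl h.symm
    · exact Or.inr ⟨h1.symm, h2.symm⟩⟩
  loopless := ⟨fun a h => by
    rcases h with h | ⟨_, h2⟩
    · exact G.ne_of_adj h rfl
    · exact H.ne_of_adj h2 rfl⟩

/-!
The graph `K_m^H × H` is properly `m`-coloured by evaluation `(f, v) ↦ f v`, and
`χ(H) ≥ 2cd ≥ cd + d + i`. For `K_m^H` itself, maps with disjoint sets of values are adjacent,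
so `K_{a+b}^H` contains the join of `K_a^H` and `K_b^H`, and `χ(K_m^H)` is superadditive in `m`.
Splitting `cd + i` into `d` blocks of size `c` and one block of size `i`, whose constant maps
form a clique, gives `χ(K_{cd+i}^H) ≥ d(c + 1) + i`.
-/

section Join

variable {V₁ V₂ W α : Type*} {G₁ : SimpleGraph V₁} {G₂ : SimpleGraph V₂} {G : SimpleGraph W}

lemma colorable_card_of_forall_mem (C : G.Coloring α) (s : Finset α) (hs : ∀ v, C v ∈ s) :
    G.Colorable s.card := by
  simpa using (Coloring.mk (fun v => (⟨C v, hs v⟩ : s))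
    fun h heq => C.valid h (congrArg Subtype.val heq)).colorable

lemma exists_colorable_add_le_of_forall_adj (φ₁ : G₁ →g G) (φ₂ : G₂ →g G)
    (hadj : ∀ x y, G.Adj (φ₁ x) (φ₂ y)) {n : ℕ} (hG : G.Colorable n) :
    ∃ p q, p + q ≤ n ∧ G₁.Colorable p ∧ G₂.Colorable q := by
  classical
  obtain ⟨C⟩ := hG
  let S₁ : Finset (Fin n) := {k | ∃ x, C (φ₁ x) = k}
  let S₂ : Finset (Fin n) := {k | ∃ y, C (φ₂ y) = k}
  have hdisj : Disjoint S₁ S₂ := by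
    refine Finset.disjoint_filter.2 ?_
    rintro _ - ⟨x, rfl⟩ ⟨y, hy⟩
    exact C.valid (hadj x y) hy.symm
  refine ⟨S₁.card, S₂.card, ?_, ?_, ?_⟩
  · rw [← Finset.card_union_of_disjoint hdisj]
    exact (Finset.card_le_univ _).trans_eq (Fintype.card_fin n)
  · exact colorable_card_of_forall_mem (C.comp φ₁) S₁ fun x => by simp [S₁]
  · exact colorable_card_of_forall_mem (C.comp φ₂) S₂ fun y => by simp [S₂]

lemma chromaticNumber_add_le_of_forall_adj (φ₁ : G₁ →g G) (φ₂ : G₂ →g G)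
    (hadj : ∀ x y, G.Adj (φ₁ x) (φ₂ y)) :
    G₁.chromaticNumber + G₂.chromaticNumber ≤ G.chromaticNumber := by
  rcases eq_or_ne G.chromaticNumber ⊤ with h | h
  · simp [h]
  obtain ⟨p, q, hpq, hp, hq⟩ :=
    exists_colorable_add_le_of_forall_adj φ₁ φ₂ hadj (colorable_of_chromaticNumber_ne_top h)
  calc G₁.chromaticNumber + G₂.chromaticNumber ≤ p + q :=
        add_le_add hp.chromaticNumber_le hq.chromaticNumber_le
    _ ≤ G.chromaticNumber.toNat := mod_cast hpq
    _ = G.chromaticNumber := ENat.natCast_toNat h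

end Join

def tensorProdMap {V₁ V₂ W₁ W₂ : Type*} {G₁ : SimpleGraph V₁} {G₂ : SimpleGraph V₂}
    {H₁ : SimpleGraph W₁} {H₂ : SimpleGraph W₂} (φ : G₁ →g G₂) (ψ : H₁ →g H₂) :
    tensorProd G₁ H₁ →g tensorProd G₂ H₂ where
  toFun := Prod.map φ ψ
  map_rel' h := ⟨φ.map_rel h.1, ψ.map_rel h.2⟩

section ExpGraph

variable {V : Type*} (H : SimpleGraph V)

def expGraphMap {a b : ℕ} (e : Fin a ↪ Fin b) : expGraph H a →g expGraph H b where
  toFun f := e ∘ f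
  map_rel' h := ⟨fun hfg => h.1 (e.injective.comp_left hfg),
    fun u v huv heq => h.2 u v huv (e.injective heq)⟩

lemma expGraph_adj_of_forall_ne [Nonempty V] {m : ℕ} {f g : V → Fin m}
    (h : ∀ u v, f u ≠ g v) : (expGraph H m).Adj f g :=
  ⟨fun hfg => h (Classical.arbitrary V) _ (congrFun hfg _), fun u v _ => h u v⟩

lemma chromaticNumber_expGraph_add_le [Nonempty V] (a b : ℕ) :
    (expGraph H a).chromaticNumber + (expGraph H b).chromaticNumber ≤
      (expGraph H (a + b)).chromaticNumber :=
  chromaticNumber_add_le_of_forall_adj (expGraphMap H (Fin.castAddEmb b))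
    (expGraphMap H (Fin.natAddEmb a)) fun f g => expGraph_adj_of_forall_ne H fun u v h => by
      change Fin.castAdd b (f u) = Fin.natAdd a (g v) at h
      have := (f u).isLt
      simp only [Fin.ext_iff, Fin.val_castAdd, Fin.val_natAdd] at h
      omega

lemma natCast_mul_chromaticNumber_expGraph_le [Nonempty V] (a k : ℕ) :
    (k : ℕ∞) * (expGraph H a).chromaticNumber ≤ (expGraph H (a * k)).chromaticNumber := by
  induction k with
  | zero => simp
  | succ k ih =>
    calc ((k + 1 : ℕ) : ℕ∞) * (expGraph H a).chromaticNumber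
        = k * (expGraph H a).chromaticNumber + (expGraph H a).chromaticNumber := by
          push_cast; ring
      _ ≤ (expGraph H (a * k)).chromaticNumber + (expGraph H a).chromaticNumber := by gcongr
      _ ≤ (expGraph H (a * (k + 1))).chromaticNumber := chromaticNumber_expGraph_add_le H _ _

lemma natCast_le_chromaticNumber_expGraph [Nonempty V] (m : ℕ) :
    (m : ℕ∞) ≤ (expGraph H m).chromaticNumber :=
  le_chromaticNumber_of_pairwise_adj (by simp) (fun j _ => j)
    fun _ _ h => expGraph_adj_of_forall_ne H fun _ _ => h

lemma le_chromaticNumber_expGraph [Nonempty V] {c : ℕ}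
    (hχ : ((c + 1 : ℕ) : ℕ∞) ≤ (expGraph H c).chromaticNumber) (d i : ℕ) :
    ((d * (c + 1) + i : ℕ) : ℕ∞) ≤ (expGraph H (c * d + i)).chromaticNumber :=
  calc ((d * (c + 1) + i : ℕ) : ℕ∞)
      ≤ d * (expGraph H c).chromaticNumber + i := by
        push_cast
        gcongr
        exact_mod_cast hχ
    _ ≤ (expGraph H (c * d)).chromaticNumber + (expGraph H i).chromaticNumber :=
        add_le_add (natCast_mul_chromaticNumber_expGraph_le H c d)
          (natCast_le_chromaticNumber_expGraph H i)
    _ ≤ (expGraph H (c * d + i)).chromaticNumber := chromaticNumber_expGraph_add_le H (c * d) i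

lemma colorable_tensorProd_expGraph (m : ℕ) : (tensorProd (expGraph H m) H).Colorable m :=
  ⟨Coloring.mk (fun x => x.1 x.2) fun h => h.1.2 _ _ h.2⟩

end ExpGraph

lemma exists_fin_of_tensorProd_chromaticNumber_le {V W : Type*} [Finite V] [Finite W]
    (G : SimpleGraph V) (H : SimpleGraph W) {n k : ℕ} (hG : (n : ℕ∞) ≤ G.chromaticNumber)
    (hH : (n : ℕ∞) ≤ H.chromaticNumber) (hGH : (tensorProd G H).chromaticNumber ≤ k) :
    ∃ (p q : ℕ) (G' : SimpleGraph (Fin p)) (H' : SimpleGraph (Fin q)),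
      (n : ℕ∞) ≤ G'.chromaticNumber ∧ (n : ℕ∞) ≤ H'.chromaticNumber ∧
      (tensorProd G' H').chromaticNumber ≤ k := by
  have := Fintype.ofFinite V
  have := Fintype.ofFinite W
  let eG := G.overFinIso rfl
  let eH := H.overFinIso rfl
  refine ⟨_, _, G.overFin rfl, H.overFin rfl, hG.trans (chromaticNumber_congr eG).le,
    hH.trans (chromaticNumber_congr eH).le, ?_⟩
  exact (chromaticNumber_mono_of_hom (tensorProdMap eG.symm.toHom eH.symm.toHom)).trans hGH

lemma poljakRodl_le {n k : ℕ}
    (h : ∃ (p q : ℕ) (G : SimpleGraph (Fin p)) (H : SimpleGraph (Fin q)),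
      (n : ℕ∞) ≤ G.chromaticNumber ∧ (n : ℕ∞) ≤ H.chromaticNumber ∧
      (tensorProd G H).chromaticNumber ≤ k) :
    poljakRodl n ≤ k := by
  obtain ⟨p, q, G, H, hG, hH, hGH⟩ := h
  obtain ⟨m, hm, hmk⟩ := ENat.le_natCast_iff.1 hGH
  unfold poljakRodl
  refine (Nat.sInf_le ?_).trans hmk
  exact ⟨p, q, G, H, hG, hH, hm⟩

/-- If `χ(K_c^H) ≥ c + 1` and `χ(H) ≥ 2cd`, then for every `i` with `0 ≤ i ≤ (c-1)d`
there are graphs `G'`, `H'` with `χ(G'), χ(H') ≥ cd + d + i` and `χ(G' × H') ≤ cd + i`;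
consequently `f(cd + d + i) ≤ cd + i`. -/
theorem poljakRodl_upper_bound_of_expGraph {V : Type*} [Fintype V] (H : SimpleGraph V)
    (c d : ℕ) (hc : 0 < c) (hd : 0 < d)
    (h1 : ((c + 1 : ℕ) : ℕ∞) ≤ (expGraph H c).chromaticNumber)
    (h2 : ((2 * c * d : ℕ) : ℕ∞) ≤ H.chromaticNumber)
    (i : ℕ) (hi : i ≤ (c - 1) * d) :
    (∃ (p q : ℕ) (G' : SimpleGraph (Fin p)) (H' : SimpleGraph (Fin q)),
      ((c * d + d + i : ℕ) : ℕ∞) ≤ G'.chromaticNumber ∧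
      ((c * d + d + i : ℕ) : ℕ∞) ≤ H'.chromaticNumber ∧
      (tensorProd G' H').chromaticNumber ≤ ((c * d + i : ℕ) : ℕ∞)) ∧
    poljakRodl (c * d + d + i) ≤ c * d + i := by
  have : Nonempty V := by
    by_contra hV
    have := not_nonempty_iff.1 hV
    rw [chromaticNumber_eq_zero_of_isEmpty, nonpos_iff_eq_zero, Nat.cast_eq_zero] at h2
    exact (Nat.mul_pos (Nat.mul_pos two_pos hc) hd).ne' h2
  have hG : ((c * d + d + i : ℕ) : ℕ∞) ≤ (expGraph H (c * d + i)).chromaticNumber := by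
    convert le_chromaticNumber_expGraph H h1 d i using 2
    ring
  have hH : ((c * d + d + i : ℕ) : ℕ∞) ≤ H.chromaticNumber := by
    refine le_trans (Nat.cast_le.2 ?_) h2
    have := Nat.sub_one_mul c d
    have : 2 * c * d = c * d + c * d := by ring
    have := Nat.le_mul_of_pos_left d hc
    omega
  have hwit := exists_fin_of_tensorProd_chromaticNumber_le _ H hG hH
    (colorable_tensorProd_expGraph H (c * d + i)).chromaticNumber_le
  exact ⟨hwit, poljakRodl_le hwit⟩
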